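/- arXiv:2207.02535 — 4 statements merged into one kernel-verified Lean document; each statement's English description precedes it below -/
import Mathlib

section
/- Let C be a k-dimensional linear code in F_q^n with generator matrix G, and let 0 ≤ e ≤ h−1. Then the rank of the k×k matrix G·σ^{h−e}(G^T) (over F_q) equals k − dim(Hull_e(C)); in particular this rank is the same for every choice of generator matrix G of C. -/
open Finset

variable {F : Type*}

/-- The `e`-Galois dual of a linear code `C ⊆ F_q^n` (`q = p^h`):
`C^{⊥_e} = {x | ∀ c ∈ C, ∑ i, x i * (c i)^(p^e) = 0}`. -/
def galoisDual [Field F] (p e : ℕ) {n : ℕ} (C : Submodule F (Fin n → F)) :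
    Submodule F (Fin n → F) where
  carrier := {x | ∀ c ∈ C, ∑ i, x i * c i ^ p ^ e = 0}
  add_mem' := by
    intro a b ha hb c hc
    have h1 := ha c hc
    have h2 := hb c hc
    try simp only [Set.mem_setOf_eq] at h1 h2 ⊢
    simp only [Pi.add_apply, add_mul, Finset.sum_add_distrib, h1, h2, add_zero]
  zero_mem' := by
    intro c hc
    simp
  smul_mem' := by
    intro r a ha c hc
    have h1 := ha c hc
    try simp only [Set.mem_setOf_eq] at h1 ⊢
    simp only [Pi.smul_apply, smul_eq_mul, mul_assoc, ← Finset.mul_sum, h1, mul_zero]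

/-- The `e`-Galois hull of `C`: `Hull_e(C) = C ∩ C^{⊥_e}`. -/
def galoisHull [Field F] (p e : ℕ) {n : ℕ} (C : Submodule F (Fin n → F)) :
    Submodule F (Fin n → F) :=
  C ⊓ galoisDual p e C

/-- `G` is a generator matrix of `C`: its rows form a basis of `C`. -/
def IsGenMatrix [Field F] {n k : ℕ} (C : Submodule F (Fin n → F))
    (G : Matrix (Fin k) (Fin n) F) : Prop :=
  LinearIndependent F (fun i : Fin k => G i) ∧
    Submodule.span F (Set.range fun i : Fin k => G i) = C

/-- `d` is the minimum (Hamming) distance of the linear code `C`. -/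
def IsMinDist [Field F] [DecidableEq F] {n : ℕ} (C : Submodule F (Fin n → F)) (d : ℕ) : Prop :=
  (∃ c ∈ C, c ≠ 0 ∧ hammingNorm c = d) ∧ ∀ c ∈ C, c ≠ 0 → d ≤ hammingNorm c

/-!
Applying the field automorphism `σ^e` entrywise preserves rank, and turns `G · σ^{h-e}(Gᵀ)` into
`σ^e(G) · Gᵀ` because `σ^e ∘ σ^{h-e} = σ^h = id` on `F_q`. Now `σ^e(G) · Gᵀ · b = 0` says exactly
that the codeword `b G` is `e`-orthogonal to every row of `G`, i.e. lies in `C^{⊥_e}`, hence in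
`Hull_e(C)`. As
`b ↦ b G` is injective, the null space of `σ^e(G) · Gᵀ` has dimension `dim Hull_e(C)`, and
rank–nullity concludes.
-/

open scoped Matrix

theorem Matrix.map_mem_range_mulVecLin {m n K L : Type*} [Fintype n] [CommSemiring K]
    [CommSemiring L] (f : K →+* L) (A : Matrix m n K) {v : m → K}
    (hv : v ∈ LinearMap.range A.mulVecLin) : f ∘ v ∈ LinearMap.range (A.map f).mulVecLin := by
  obtain ⟨x, rfl⟩ := hv
  exact ⟨f ∘ x, funext fun i => (f.map_mulVec A x i).symm⟩

theorem Matrix.rank_map_ringEquiv {m n K L : Type*} [Fintype n] [Field K] [Field L]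
    (f : K ≃+* L) (A : Matrix m n K) : (A.map f).rank = A.rank := by
  have hA : (A.map f).map f.symm = A := by ext; simp
  let j : LinearMap.range A.mulVecLin ≃+ LinearMap.range (A.map f).mulVecLin :=
    { toFun := fun v => ⟨f ∘ v, A.map_mem_range_mulVecLin f.toRingHom v.2⟩
      invFun := fun w => ⟨f.symm ∘ w, by
        simpa [hA] using (A.map f).map_mem_range_mulVecLin f.symm.toRingHom w.2⟩
      left_inv := fun v => by ext; simp
      right_inv := fun w => by ext; simp
      map_add' := fun v w => by ext; simp }
  have := lift_rank_eq_of_equiv_equiv f j f.bijective fun r v => by ext; simp [j]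
  simpa [Matrix.rank, Module.finrank] using congrArg Cardinal.toNat this.symm

theorem Submodule.finrank_comap_eq_of_injective {K V W : Type*} [DivisionRing K] [AddCommGroup V]
    [Module K V] [AddCommGroup W] [Module K W] {f : V →ₗ[K] W} (hf : Function.Injective f)
    {H : Submodule K W} (hH : H ≤ LinearMap.range f) :
    Module.finrank K (H.comap f) = Module.finrank K H := by
  conv_rhs => rw [← Submodule.map_comap_eq_of_le hH]
  exact (Submodule.equivMapOfInjective f hf _).finrank_eq

section GaloisHull

variable [Field F] (p e : ℕ) [ExpChar F p] {n k : ℕ}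

def galoisPairing (x : Fin n → F) : (Fin n → F) →ₛₗ[iterateFrobenius F p e] F where
  toFun c := ∑ i, x i * c i ^ p ^ e
  map_add' c d := by simp [add_pow_expChar_pow, mul_add, sum_add_distrib]
  map_smul' r c := by simp [mul_pow, mul_sum, iterateFrobenius_def, mul_left_comm]

theorem galoisDual_span_range_row (G : Matrix (Fin k) (Fin n) F) :
    galoisDual p e (Submodule.span F (Set.range G.row))
      = LinearMap.ker (G.map (iterateFrobenius F p e)).mulVecLin := by
  ext x
  change Submodule.span F (Set.range G.row) ≤ LinearMap.ker (galoisPairing p e x) ↔ _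
  rw [Submodule.span_le, Set.range_subset_iff, LinearMap.mem_ker, funext_iff]
  simp [galoisPairing, Matrix.mulVec, dotProduct, iterateFrobenius_def, mul_comm]

theorem ker_mulVecLin_map_iterateFrobenius_mul_transpose (G : Matrix (Fin k) (Fin n) F) :
    LinearMap.ker (G.map (iterateFrobenius F p e) * Gᵀ).mulVecLin
      = (galoisHull p e (Submodule.span F (Set.range G.row))).comap G.vecMulLinear := by
  ext b
  have hb : b ᵥ* G ∈ Submodule.span F (Set.range G.row) :=
    range_vecMulLinear G ▸ LinearMap.mem_range_self _ b
  rw [LinearMap.mem_ker, Matrix.mulVecLin_apply, ← Matrix.mulVec_mulVec, Matrix.mulVec_transpose,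
    Submodule.mem_comap, Matrix.vecMulLinear_apply, galoisHull, Submodule.mem_inf,
    galoisDual_span_range_row, LinearMap.mem_ker, Matrix.mulVecLin_apply]
  exact (and_iff_right hb).symm

theorem rank_map_iterateFrobenius_mul_transpose {C : Submodule F (Fin n → F)}
    {G : Matrix (Fin k) (Fin n) F} (hG : IsGenMatrix C G) :
    (G.map (iterateFrobenius F p e) * Gᵀ).rank = k - Module.finrank F (galoisHull p e C) := by
  obtain ⟨hindep, hspan⟩ := hG
  have hC : Submodule.span F (Set.range G.row) = C := hspan
  subst hC
  have hinj : Function.Injective G.vecMulLinear := Matrix.vecMul_injective_iff.mpr hindep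
  have hle : galoisHull p e (Submodule.span F (Set.range G.row)) ≤ LinearMap.range G.vecMulLinear := by
    rw [range_vecMulLinear]
    exact inf_le_left
  have hker := Submodule.finrank_comap_eq_of_injective hinj hle
  rw [← ker_mulVecLin_map_iterateFrobenius_mul_transpose] at hker
  have := LinearMap.finrank_range_add_finrank_ker (G.map (iterateFrobenius F p e) * Gᵀ).mulVecLin
  rw [Module.finrank_fin_fun] at this
  rw [Matrix.rank]
  omega

end GaloisHull

theorem rank_mul_frobenius_transpose_eq_dim_sub_hull_general
    (p h : ℕ) (hp : p.Prime)
    [Field F] [Fintype F] (hcard : Fintype.card F = p ^ h)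
    (n k e : ℕ) (he : e ≤ h - 1)
    (C : Submodule F (Fin n → F))
    (G : Matrix (Fin k) (Fin n) F) (hG : IsGenMatrix C G) :
    (G * (G.transpose.map fun a => a ^ p ^ (h - e))).rank
      = k - Module.finrank F (galoisHull p e C) := by
  have := Fact.mk hp
  have := charP_of_card_eq_prime_pow hcard
  set σ := iterateFrobenius F p e
  have hσ_inv : ∀ a : F, σ (a ^ p ^ (h - e)) = a := fun a => by
    rw [iterateFrobenius_def, ← pow_mul, ← pow_add, Nat.sub_add_cancel (by omega), ← hcard,
      FiniteField.pow_card]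
  have hσ : Function.Bijective σ := Finite.injective_iff_bijective.mp σ.injective
  calc _ = ((G * Gᵀ.map fun a => a ^ p ^ (h - e)).map σ).rank :=
        (Matrix.rank_map_ringEquiv (RingEquiv.ofBijective σ hσ) _).symm
    _ = (G.map σ * Gᵀ).rank := by
        rw [Matrix.map_mul, Matrix.map_map]
        congr
        ext
        simp only [Matrix.map_apply, Matrix.transpose_apply, Function.comp_apply, hσ_inv]
    _ = _ := rank_map_iterateFrobenius_mul_transpose p e hG

/-- Lemma 8 (new rank formula): for any generator matrix `G` of a `k`-dimensional code `C`,
`rank (G · σ^{h-e}(Gᵀ)) = k - dim Hull_e(C)`; in particular the rank does not depend on `G`. -/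
theorem rank_mul_frobenius_transpose_eq_dim_sub_hull
    (p h : ℕ) (hp : p.Prime) (hh : 0 < h)
    [Field F] [Fintype F] (hcard : Fintype.card F = p ^ h)
    (n k e : ℕ) (he : e ≤ h - 1)
    (C : Submodule F (Fin n → F)) (hk : Module.finrank F C = k)
    (G : Matrix (Fin k) (Fin n) F) (hG : IsGenMatrix C G) :
    (G * (G.transpose.map fun a => a ^ p ^ (h - e))).rank
      = k - Module.finrank F (galoisHull p e C) :=
  rank_mul_frobenius_transpose_eq_dim_sub_hull_general p h hp hcard n k e he C G hG
end

section
/- Let C be a linear code in F_q^n. Then for every integer e with 0 ≤ e ≤ h−1, dim(Hull_e(C)) = dim(Hull_e(C^{⊥_e})), i.e., the e-Galois hull of C and the e-Galois hull of its e-Galois dual code have equal dimension. -/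
/-!
Since `|F| = p ^ h`, the map `c ↦ c ^ p ^ e` is a field automorphism `σ` of `F`, so `C^{⊥_e}` is
the dot-product orthogonal of the coordinatewise image `σ(C)`. Hence
`dim C + dim C^{⊥_e} = n`, and `⊥_e` turns sums into intersections. Therefore
`Hull_e(C^{⊥_e}) = C^{⊥_e} ∩ (C^{⊥_e})^{⊥_e} = (C + C^{⊥_e})^{⊥_e}` has dimension
`n - dim (C + C^{⊥_e}) = dim C + dim C^{⊥_e} - dim (C + C^{⊥_e}) = dim Hull_e(C)`.
-/

open Finset

variable {F : Type*}

open Module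

lemma Submodule.finrank_inf_dual_eq_finrank_dual_inf_dual_dual {K V : Type*} [Field K]
    [AddCommGroup V] [Module K V] [FiniteDimensional K V] (δ : Submodule K V → Submodule K V)
    (hδ_finrank : ∀ W : Submodule K V, finrank K W + finrank K (δ W) = finrank K V)
    (hδ_sup : ∀ A B, δ (A ⊔ B) = δ A ⊓ δ B) (W : Submodule K V) :
    finrank K ↥(W ⊓ δ W) = finrank K ↥(δ W ⊓ δ (δ W)) := by
  have hW := hδ_finrank W
  have hsup := hδ_finrank (W ⊔ δ W)
  have := finrank_sup_add_finrank_inf_eq W (δ W)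
  rw [← hδ_sup]
  omega

section TwistedOrthogonal

attribute [local instance] RingHomInvPair.of_ringEquiv RingHomInvPair.of_ringEquiv_symm

lemma Submodule.finrank_map_semilinearEquiv {K L V W : Type*} [Semiring K] [Semiring L]
    [AddCommMonoid V] [Module K V] [AddCommMonoid W] [Module L W] {σ : K ≃+* L}
    (f : V ≃ₛₗ[(σ : K →+* L)] W) (D : Submodule K V) :
    finrank L (D.map (f : V →ₛₗ[(σ : K →+* L)] W)) = finrank K D := by
  simpa [finrank] using congrArg Cardinal.toNat (lift_rank_eq_of_equiv_equiv σ
    (f.submoduleMap D).toAddEquiv σ.bijective (f.submoduleMap D).map_smulₛₗ).symm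

variable {K ι : Type*} [Field K]

def RingEquiv.piSemilinearEquiv (σ : K ≃+* K) : (ι → K) ≃ₛₗ[(σ : K →+* K)] (ι → K) where
  toFun x i := σ (x i)
  invFun x i := σ.symm (x i)
  map_add' x y := funext fun i => map_add σ (x i) (y i)
  map_smul' r x := funext fun i => map_mul σ r (x i)
  left_inv x := funext fun i => σ.symm_apply_apply (x i)
  right_inv x := funext fun i => σ.apply_symm_apply (x i)

variable [Fintype ι] [DecidableEq ι]

def twistedOrthogonal (σ : K ≃+* K) (D : Submodule K (ι → K)) : Submodule K (ι → K) :=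
  (D.map σ.piSemilinearEquiv.toLinearMap).dualAnnihilator.comap
    (dotProductEquiv K ι : (ι → K) →ₗ[K] Dual K (ι → K))

lemma mem_twistedOrthogonal {σ : K ≃+* K} {D : Submodule K (ι → K)} {x : ι → K} :
    x ∈ twistedOrthogonal σ D ↔ ∀ c ∈ D, ∑ i, x i * σ (c i) = 0 := by
  simp [twistedOrthogonal, dotProduct, RingEquiv.piSemilinearEquiv]

lemma finrank_add_finrank_twistedOrthogonal (σ : K ≃+* K) (D : Submodule K (ι → K)) :
    finrank K D + finrank K (twistedOrthogonal σ D) = Fintype.card ι := by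
  rw [twistedOrthogonal, Submodule.comap_equiv_eq_map_symm, LinearEquiv.finrank_map_eq,
    ← Submodule.finrank_map_semilinearEquiv σ.piSemilinearEquiv D,
    Subspace.finrank_add_finrank_dualAnnihilator_eq, finrank_fintype_fun_eq_card]

lemma twistedOrthogonal_sup (σ : K ≃+* K) (A B : Submodule K (ι → K)) :
    twistedOrthogonal σ (A ⊔ B) = twistedOrthogonal σ A ⊓ twistedOrthogonal σ B := by
  simp only [twistedOrthogonal, Submodule.map_sup, Submodule.dualAnnihilator_sup_eq,
    Submodule.comap_inf]

lemma finrank_inf_twistedOrthogonal_eq (σ : K ≃+* K) (C : Submodule K (ι → K)) :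
    finrank K ↥(C ⊓ twistedOrthogonal σ C) =
      finrank K ↥(twistedOrthogonal σ C ⊓ twistedOrthogonal σ (twistedOrthogonal σ C)) :=
  Submodule.finrank_inf_dual_eq_finrank_dual_inf_dual_dual (twistedOrthogonal σ)
    (fun _ => by rw [finrank_add_finrank_twistedOrthogonal, finrank_fintype_fun_eq_card])
    (twistedOrthogonal_sup σ) C

end TwistedOrthogonal

lemma galoisDual_eq_twistedOrthogonal [Field F] (p e : ℕ) [ExpChar F p] [PerfectRing F p]
    {n : ℕ} (D : Submodule F (Fin n → F)) :
    galoisDual p e D = twistedOrthogonal (iterateFrobeniusEquiv F p e) D := by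
  ext x
  simp [mem_twistedOrthogonal, galoisDual, iterateFrobenius_def]

theorem finrank_galoisHull_eq_finrank_galoisHull_dual_general
    (p h : ℕ) (hp : p.Prime)
    [Field F] [Fintype F] (hcard : Fintype.card F = p ^ h)
    (n e : ℕ)
    (C : Submodule F (Fin n → F)) :
    Module.finrank F (galoisHull p e C)
      = Module.finrank F (galoisHull p e (galoisDual p e C)) := by
  have := Fact.mk hp
  have : CharP F p := charP_of_card_eq_prime_pow hcard
  have : ExpChar F p := ExpChar.prime hp
  rw [galoisHull, galoisHull, galoisDual_eq_twistedOrthogonal, galoisDual_eq_twistedOrthogonal]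
  exact finrank_inf_twistedOrthogonal_eq _ C

/-- Corollary: `dim Hull_e(C) = dim Hull_e(C^{⊥_e})` for every `0 ≤ e ≤ h - 1`. -/
theorem finrank_galoisHull_eq_finrank_galoisHull_dual
    (p h : ℕ) (hp : p.Prime) (hh : 0 < h)
    [Field F] [Fintype F] (hcard : Fintype.card F = p ^ h)
    (n e : ℕ) (he : e ≤ h - 1)
    (C : Submodule F (Fin n → F)) :
    Module.finrank F (galoisHull p e C)
      = Module.finrank F (galoisHull p e (galoisDual p e C)) :=
  finrank_galoisHull_eq_finrank_galoisHull_dual_general p h hp hcard n e C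
end

section
/- Let q = p^h be an odd prime power and let ω be a primitive element of F_q (a generator of the multiplicative group F_q^*). Let 0 ≤ e ≤ h−1. If either (1) h/gcd(e,h) is odd and (p^h−1)/2 is even, or (2) h/gcd(e,h) is even and (p^{gcd(e,h)}+1) divides (p^h−1)/2, then there exists an integer t_0 such that ω^{t_0(p^e+1)} = −1. -/
/-! Put `d = gcd(p^e + 1, p^h - 1)`. In `ZMod d` we have `p^e = -1` and `p^h = 1`, and Bézout for
`e, h` gives `p^gcd(e,h) = -1`; hence `d ∣ p^gcd(e,h) + 1`, and `d ∣ 2` when `h / gcd(e,h)` is odd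
(raise `p^gcd(e,h) = -1` to that power). Either hypothesis thus gives `d ∣ (q - 1)/2`. Writing
`-1 = ω^m`, the order `q - 1` of `ω` divides `2m`, so `(q - 1)/2 ∣ m`, and Bézout for `p^e + 1`
and `q - 1` produces `t₀`. -/

open Finset

variable {F : Type*}

theorem pow_gcd_eq_one_or_neg_one {M : Type*} [Monoid M] [HasDistribNeg M] {x : M} {e h : ℕ}
    (he : x ^ e = -1) (hh : x ^ h = 1) : x ^ e.gcd h = 1 ∨ x ^ e.gcd h = -1 := by
  rcases Nat.eq_zero_or_pos e with rfl | he0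
  · rw [Nat.gcd_zero_left]
    exact Or.inl hh
  obtain ⟨y, rfl⟩ := IsUnit.of_pow_eq_one (a := x) (n := 2 * e) (by rw [pow_mul', he, neg_one_sq])
    (by omega)
  have hye : y ^ e = -1 := Units.ext (by simpa using he)
  have hyh : y ^ h = 1 := Units.ext (by simpa using hh)
  have hyg : y ^ e.gcd h = (-1) ^ e.gcdA h := by
    rw [← zpow_natCast, Nat.gcd_eq_gcd_ab, zpow_add, zpow_mul, zpow_mul, zpow_natCast, zpow_natCast,
      hye, hyh, one_zpow, mul_one]
  rw [← Units.val_pow_eq_pow_val, hyg]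
  rcases Int.even_or_odd (e.gcdA h) with hA | hA
  · exact Or.inl (by rw [hA.neg_one_zpow, Units.val_one])
  · exact Or.inr (by rw [hA.neg_one_zpow, Units.coe_neg_one])

theorem pow_gcd_eq_neg_one {M : Type*} [Monoid M] [HasDistribNeg M] {x : M} {e h : ℕ}
    (he : x ^ e = -1) (hh : x ^ h = 1) : x ^ e.gcd h = -1 := by
  refine (pow_gcd_eq_one_or_neg_one he hh).elim (fun h1 => ?_) id
  calc x ^ e.gcd h = 1 := h1
    _ = -1 := by rw [← he, ← Nat.mul_div_cancel' (e.gcd_dvd_left h), pow_mul, h1, one_pow]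

theorem ZMod.natCast_pow_eq_neg_one_of_dvd {d p e : ℕ} (hd : d ∣ p ^ e + 1) :
    (p : ZMod d) ^ e = -1 := by
  rw [← ZMod.natCast_eq_zero_iff, Nat.cast_add, Nat.cast_pow, Nat.cast_one] at hd
  exact eq_neg_of_add_eq_zero_left hd

theorem ZMod.natCast_pow_eq_one_of_dvd {d p h : ℕ} (hp : 0 < p) (hd : d ∣ p ^ h - 1) :
    (p : ZMod d) ^ h = 1 := by
  rw [← ZMod.natCast_eq_zero_iff, Nat.cast_sub (Nat.one_le_pow _ _ hp), Nat.cast_pow,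
    Nat.cast_one, sub_eq_zero] at hd
  exact hd

theorem gcd_pow_add_one_pow_sub_one_dvd_half {p e h : ℕ} (hp : 0 < p)
    (hcond : (Odd (h / Nat.gcd e h) ∧ Even ((p ^ h - 1) / 2)) ∨
      (Even (h / Nat.gcd e h) ∧ (p ^ Nat.gcd e h + 1) ∣ ((p ^ h - 1) / 2))) :
    (p ^ e + 1).gcd (p ^ h - 1) ∣ (p ^ h - 1) / 2 := by
  set d := (p ^ e + 1).gcd (p ^ h - 1)
  have he := ZMod.natCast_pow_eq_neg_one_of_dvd (Nat.gcd_dvd_left (p ^ e + 1) (p ^ h - 1))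
  have hh := ZMod.natCast_pow_eq_one_of_dvd hp (Nat.gcd_dvd_right (p ^ e + 1) (p ^ h - 1))
  have hg : (p : ZMod d) ^ e.gcd h = -1 := pow_gcd_eq_neg_one he hh
  rcases hcond with ⟨hodd, heven⟩ | ⟨-, hdvd⟩
  · have hneg : (-1 : ZMod d) = 1 := by
      rw [← hodd.neg_one_pow, ← hg, ← pow_mul, Nat.mul_div_cancel' (e.gcd_dvd_right h), hh]
    have hd2 : d ∣ 2 := by
      rw [← ZMod.natCast_eq_zero_iff, Nat.cast_ofNat, ← one_add_one_eq_two]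
      exact neg_eq_iff_add_eq_zero.mp hneg
    exact hd2.trans heven.two_dvd
  · refine (?_ : d ∣ p ^ e.gcd h + 1).trans hdvd
    rw [← ZMod.natCast_eq_zero_iff, Nat.cast_add, Nat.cast_pow, Nat.cast_one, hg, neg_add_cancel]

theorem exists_zpow_mul_eq_zpow_of_gcd_dvd {G : Type*} [Group G] (u : G) {a k : ℤ}
    (hk : (a.gcd (orderOf u) : ℤ) ∣ k) : ∃ t : ℤ, u ^ (t * a) = u ^ k := by
  obtain ⟨m, rfl⟩ := hk
  refine ⟨a.gcdA (orderOf u) * m, ?_⟩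
  have hbez : a.gcdA (orderOf u) * m * a =
      a.gcd (orderOf u) * m + orderOf u * -(a.gcdB (orderOf u) * m) := by
    rw [Int.gcd_eq_gcd_ab]; ring
  rw [hbez, zpow_add, zpow_mul u (orderOf u : ℤ), zpow_natCast, pow_orderOf_eq_one, one_zpow,
    mul_one]

theorem FiniteField.orderOf_mk0_of_forall_eq_pow [Field F] [Fintype F] {ω : F}
    (hω : ∀ x : F, x ≠ 0 → ∃ m : ℕ, x = ω ^ m) (hω0 : ω ≠ 0) :
    orderOf (Units.mk0 ω hω0) = Fintype.card F - 1 := by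
  rw [orderOf_eq_card_of_forall_mem_zpowers, Nat.card_units, Nat.card_eq_fintype_card]
  intro v
  obtain ⟨m, hm⟩ := hω v v.ne_zero
  exact ⟨m, Units.ext (by simp [hm])⟩

theorem FiniteField.exists_zpow_mul_eq_neg_one [Field F] [Fintype F]
    (hF : Odd (Fintype.card F)) {ω : F} (hω : ∀ x : F, x ≠ 0 → ∃ m : ℕ, x = ω ^ m) {a : ℤ}
    (ha : a.gcd (Fintype.card F - 1 : ℕ) ∣ (Fintype.card F - 1) / 2) :
    ∃ t : ℤ, ω ^ (t * a) = -1 := by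
  have hchar : ringChar F ≠ 2 := by
    rw [Ne, FiniteField.even_card_iff_char_two, Nat.odd_iff.mp hF]
    exact one_ne_zero
  obtain ⟨m, hm⟩ := hω (-1) (neg_ne_zero.mpr one_ne_zero)
  have hω0 : ω ≠ 0 := by
    rintro rfl
    rcases m with _ | m
    · exact Ring.neg_one_ne_one_of_char_ne_two hchar (by simpa using hm)
    · simp at hm
  set u := Units.mk0 ω hω0
  have hord := FiniteField.orderOf_mk0_of_forall_eq_pow hω hω0
  have hum : u ^ m = -1 := Units.ext (by simp [u, hm])
  have hhalf : (Fintype.card F - 1) / 2 ∣ m := by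
    have h2m : orderOf u ∣ 2 * m := orderOf_dvd_of_pow_eq_one (by rw [pow_mul', hum, neg_one_sq])
    rw [hord, ← Nat.two_mul_div_two_of_even (Nat.Odd.sub_odd hF odd_one)] at h2m
    exact Nat.dvd_of_mul_dvd_mul_left two_pos h2m
  obtain ⟨t, ht⟩ := exists_zpow_mul_eq_zpow_of_gcd_dvd u (a := a) (k := m)
    (by rw [hord]; exact_mod_cast ha.trans hhalf)
  refine ⟨t, ?_⟩
  simpa [u, hum] using congrArg Units.val ht

theorem exists_t0_pow_eq_neg_one_general
    (p h : ℕ) (hpodd : Odd p)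
    [Field F] [Fintype F] (hcard : Fintype.card F = p ^ h)
    (ω : F) (hω : ∀ x : F, x ≠ 0 → ∃ m : ℕ, x = ω ^ m)
    (e : ℕ)
    (hcond : (Odd (h / Nat.gcd e h) ∧ Even ((p ^ h - 1) / 2)) ∨
      (Even (h / Nat.gcd e h) ∧ (p ^ Nat.gcd e h + 1) ∣ ((p ^ h - 1) / 2))) :
    ∃ t₀ : ℤ, ω ^ (t₀ * ((p : ℤ) ^ e + 1)) = -1 := by
  refine FiniteField.exists_zpow_mul_eq_neg_one (hcard ▸ hpodd.pow) hω ?_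
  rw [hcard]
  exact_mod_cast gcd_pow_add_one_pow_sub_one_dvd_half hpodd.pos hcond

/-- Lemma: if `q = p^h` is odd and `ω` is a primitive element of `F_q`, then under either
condition (1) `h/gcd(e,h)` odd and `(p^h-1)/2` even, or (2) `h/gcd(e,h)` even and
`(p^{gcd(e,h)}+1) ∣ (p^h-1)/2`, there is an integer `t₀` with `ω^{t₀(p^e+1)} = -1`. -/
theorem exists_t0_pow_eq_neg_one
    (p h : ℕ) (hp : p.Prime) (hpodd : Odd p) (hh : 0 < h)
    [Field F] [Fintype F] (hcard : Fintype.card F = p ^ h)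
    (ω : F) (hω : ∀ x : F, x ≠ 0 → ∃ m : ℕ, x = ω ^ m)
    (e : ℕ) (he : e ≤ h - 1)
    (hcond : (Odd (h / Nat.gcd e h) ∧ Even ((p ^ h - 1) / 2)) ∨
      (Even (h / Nat.gcd e h) ∧ (p ^ Nat.gcd e h + 1) ∣ ((p ^ h - 1) / 2))) :
    ∃ t₀ : ℤ, ω ^ (t₀ * ((p : ℤ) ^ e + 1)) = -1 :=
  exists_t0_pow_eq_neg_one_general p h hpodd hcard ω hω e hcond
end

section
/- Let q = p^h with h even and write √q = p^{h/2}. Let n' be a positive divisor of q−1, set n_1 = n'/gcd(n', √q+1), let t be an integer with 1 ≤ t ≤ (√q−1)/n_1, and set n = t·n'. Then for every integer k with 1 ≤ k ≤ ⌊(√q + n'(t−1))/(√q+1)⌋ there exists a Hermitian self-orthogonal linear code in F_q^n of dimension k and minimum distance n − k + 1 (in particular, an MDS code). -/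
/-!
The code is a generalized Reed–Solomon code `GRS_k(a, v)` of length `t n'`, hence MDS. Its
evaluation points form `t` cosets `b_j ⟨θ⟩` of the group of `n'`-th roots of unity, where the
`x_j = b_j ^ n'` are distinct elements of `𝔽_√q`. On the `j`-th coset the column multiplier `v`
satisfies `v ^ (√q + 1) = ∏_{j' ≠ j} (x_j - x_{j'})⁻¹`, which exists because this element lies in
`𝔽_√qˣ` and the norm `𝔽_qˣ → 𝔽_√qˣ` is onto. The Hermitian products of the generators `v a^l`
are then `∑_j v_j ^ (√q + 1) b_j ^ S ∑_i θ ^ (i S)` with `S = l + √q m`: the inner geometric sum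
vanishes unless `n' ∣ S`, and then `S = n' c` with `c < t - 1` by the bound on `k`, so the outer
sum `∑_j x_j ^ c / ∏_{j' ≠ j} (x_j - x_{j'})` is the coefficient of `X ^ (t - 1)` in the
interpolant of `X ^ c`, which is `0`.
-/

open Finset

variable {F : Type*}

open Polynomial

section Hamming

variable {ι : Type*} [Fintype ι] [DecidableEq ι] [Zero F] [DecidableEq F]

theorem hammingNorm_le_card_sub_of_eq_zero {x : ι → F} (s : Finset ι) (hs : ∀ i ∈ s, x i = 0) :
    hammingNorm x ≤ Fintype.card ι - #s := by
  rw [hammingNorm, ← card_compl]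
  exact card_le_card fun i hi => mem_compl.2 fun hmem => (mem_filter.1 hi).2 (hs i hmem)

theorem card_sub_le_hammingNorm_of_eq_zero {x : ι → F} (s : Finset ι)
    (hs : ∀ i, x i = 0 → i ∈ s) : Fintype.card ι - #s ≤ hammingNorm x := by
  rw [hammingNorm, ← card_compl]
  exact card_le_card fun i hi => mem_filter.2 ⟨mem_univ i, fun h => mem_compl.1 hi (hs i h)⟩

end Hamming

theorem isMinDist_of_finrank_eq [Field F] [DecidableEq F] {n k : ℕ}
    {C : Submodule F (Fin n → F)} (hk : 0 < k) (hC : Module.finrank F C = k)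
    (hw : ∀ c ∈ C, c ≠ 0 → n - k + 1 ≤ hammingNorm c) : IsMinDist C (n - k + 1) := by
  have hkn : k ≤ n := by simpa [hC] using C.finrank_le
  -- A `k`-dimensional code has a nonzero word vanishing on `k - 1` prescribed coordinates.
  let restrict : C →ₗ[F] Fin (k - 1) → F :=
    LinearMap.funLeft F F (Fin.castLE (by omega)) ∘ₗ C.subtype
  obtain ⟨c, hc, hc0⟩ := Submodule.exists_mem_ne_zero_of_ne_bot
    (LinearMap.ker_ne_bot_of_finrank_lt (f := restrict) (by simp [hC]; omega))
  have hvanish : ∀ i ∈ univ.map (Fin.castLEEmb (by omega : k - 1 ≤ n)), (c : Fin n → F) i = 0 := by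
    simp only [mem_map, mem_univ, true_and, forall_exists_index]
    rintro _ i rfl
    exact congrFun hc i
  have hle := hammingNorm_le_card_sub_of_eq_zero _ hvanish
  simp only [Fintype.card_fin, card_map, card_univ] at hle
  refine ⟨⟨c, c.2, by simpa using hc0, le_antisymm ?_ (hw c c.2 (by simpa using hc0))⟩, hw⟩
  omega

section GeneralizedReedSolomon

variable [Field F] {n k : ℕ}

noncomputable def weightedEval (a v : Fin n → F) : F[X] →ₗ[F] Fin n → F :=
  LinearMap.pi fun i => v i • leval (a i)

@[simp]
theorem weightedEval_apply (a v : Fin n → F) (P : F[X]) (i : Fin n) :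
    weightedEval a v P i = v i * P.eval (a i) :=
  rfl

noncomputable def grsCode (k : ℕ) (a v : Fin n → F) : Submodule F (Fin n → F) :=
  (degreeLT F k).map (weightedEval a v)

theorem grsCode_eq_span (a v : Fin n → F) :
    grsCode k a v = Submodule.span F (Set.range fun m : Fin k => fun i => v i * a i ^ (m : ℕ)) := by
  classical
  rw [grsCode, degreeLT_eq_span_X_pow, Submodule.map_span]
  congr 1
  ext x
  simp [Fin.exists_iff, funext_iff, eq_comm]

theorem card_sub_natDegree_le_hammingNorm_weightedEval [DecidableEq F] {a v : Fin n → F}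
    (ha : Function.Injective a) (hv : ∀ i, v i ≠ 0) {P : F[X]} (hP : P ≠ 0) :
    n - P.natDegree ≤ hammingNorm (weightedEval a v P) := by
  classical
  let zeros : Finset (Fin n) := {i | P.IsRoot (a i)}
  have hzeros : #zeros ≤ P.natDegree := by
    rw [← card_image_of_injective zeros ha]
    refine card_le_degree_of_subset_roots fun y hy => ?_
    obtain ⟨i, hi, rfl⟩ := mem_image.1 (mem_def.2 hy)
    exact (mem_roots hP).2 (mem_filter.1 hi).2
  have h := card_sub_le_hammingNorm_of_eq_zero (x := weightedEval a v P) zeros fun i hi =>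
    mem_filter.2 ⟨mem_univ i, (mul_eq_zero.1 hi).resolve_left (hv i)⟩
  rw [Fintype.card_fin] at h
  omega

variable [DecidableEq F] {a v : Fin n → F}

theorem le_hammingNorm_of_mem_grsCode (hkn : k ≤ n) (ha : Function.Injective a)
    (hv : ∀ i, v i ≠ 0) {c : Fin n → F} (hc : c ∈ grsCode k a v) (hc0 : c ≠ 0) :
    n - k + 1 ≤ hammingNorm c := by
  obtain ⟨P, hPk, rfl⟩ := Submodule.mem_map.1 hc
  have hP : P ≠ 0 := by rintro rfl; exact hc0 (map_zero _)
  have hdeg : P.natDegree < k := (natDegree_lt_iff_degree_lt hP).2 (mem_degreeLT.1 hPk)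
  have := card_sub_natDegree_le_hammingNorm_weightedEval ha hv hP
  omega

theorem finrank_grsCode (hkn : k ≤ n) (ha : Function.Injective a) (hv : ∀ i, v i ≠ 0) :
    Module.finrank F (grsCode k a v) = k := by
  have hinj : Function.Injective (weightedEval a v ∘ₗ (degreeLT F k).subtype) := by
    rw [← LinearMap.ker_eq_bot, LinearMap.ker_eq_bot']
    intro P hP
    by_contra hP0
    have hP0' : (P : F[X]) ≠ 0 := by simpa using hP0
    have hdeg : (P : F[X]).natDegree < k :=
      (natDegree_lt_iff_degree_lt hP0').2 (mem_degreeLT.1 P.2)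
    have := card_sub_natDegree_le_hammingNorm_weightedEval ha hv hP0'
    simp only [LinearMap.comp_apply, Submodule.subtype_apply] at hP
    rw [hP, hammingNorm_zero] at this
    omega
  calc Module.finrank F (grsCode k a v)
      = Module.finrank F (LinearMap.range (weightedEval a v ∘ₗ (degreeLT F k).subtype)) := by
        rw [LinearMap.range_comp, Submodule.range_subtype, grsCode]
    _ = k := by
        rw [LinearMap.finrank_range_of_inj hinj, (degreeLTEquiv F k).finrank_eq,
          Module.finrank_fin_fun]

theorem isMinDist_grsCode (hk : 0 < k) (hkn : k ≤ n) (ha : Function.Injective a)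
    (hv : ∀ i, v i ≠ 0) : IsMinDist (grsCode k a v) (n - k + 1) :=
  isMinDist_of_finrank_eq hk (finrank_grsCode hkn ha hv) fun _ hc hc0 =>
    le_hammingNorm_of_mem_grsCode hkn ha hv hc hc0

end GeneralizedReedSolomon

section GaloisDual

variable [Field F] {p e n : ℕ} [ExpChar F p]

theorem span_le_galoisDual_span {s : Set (Fin n → F)}
    (hs : ∀ x ∈ s, ∀ y ∈ s, ∑ i, x i * y i ^ p ^ e = 0) :
    Submodule.span F s ≤ galoisDual p e (Submodule.span F s) := by
  rw [Submodule.span_le]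
  intro x hx c hc
  induction hc using Submodule.span_induction with
  | mem y hy => exact hs x hx y hy
  | zero => simp [zero_pow (expChar_pow_pos F p e).ne']
  | add y z _ _ hy hz => simp [add_pow_expChar_pow, mul_add, sum_add_distrib, hy, hz]
  | smul r y _ hy =>
    simp only [Pi.smul_apply, smul_eq_mul, mul_pow, mul_left_comm _ (r ^ p ^ e), ← mul_sum, hy,
      mul_zero]

theorem grsCode_le_galoisDual {k : ℕ} {a v : Fin n → F}
    (hsum : ∀ l < k, ∀ m < k, ∑ i, v i ^ (p ^ e + 1) * a i ^ (l + p ^ e * m) = 0) :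
    grsCode k a v ≤ galoisDual p e (grsCode k a v) := by
  rw [grsCode_eq_span]
  refine span_le_galoisDual_span ?_
  rintro - ⟨l, rfl⟩ - ⟨m, rfl⟩
  rw [← hsum l l.2 m m.2]
  exact sum_congr rfl fun i _ => by ring

end GaloisDual

theorem Lagrange.sum_nodalWeight_mul_pow_eq_zero [Field F] {ι : Type*} [DecidableEq ι]
    {s : Finset ι} {x : ι → F} (hx : Set.InjOn x s) {c : ℕ} (hc : c + 1 < #s) :
    ∑ i ∈ s, nodalWeight s x i * x i ^ c = 0 := by
  have h := Lagrange.coeff_eq_sum hx (P := X ^ c) (by rw [degree_X_pow]; exact_mod_cast (by omega))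
  rw [coeff_X_pow, if_neg (by omega)] at h
  rw [h]
  refine sum_congr rfl fun i _ => ?_
  simp [nodalWeight, prod_inv_distrib, div_eq_mul_inv, mul_comm]

theorem Lagrange.nodalWeight_pow_expChar_pow [Field F] {ι : Type*} [DecidableEq ι] {p e : ℕ}
    [ExpChar F p] {s : Finset ι} {x : ι → F} (hx : ∀ i, x i ^ p ^ e = x i) (i : ι) :
    nodalWeight s x i ^ p ^ e = nodalWeight s x i := by
  simp only [nodalWeight, ← prod_pow, inv_pow, sub_pow_expChar_pow, hx]

theorem FiniteField.exists_isPrimitiveRoot_card_sub_one (F : Type*) [Field F] [Fintype F] :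
    ∃ ω : F, IsPrimitiveRoot ω (Fintype.card F - 1) := by
  obtain ⟨g, hg⟩ := IsCyclic.exists_ofOrder_eq_natCard (α := Fˣ)
  refine ⟨g, ?_⟩
  rw [← Nat.card_eq_fintype_card, ← Nat.card_units, ← hg, ← orderOf_units]
  exact IsPrimitiveRoot.orderOf _

theorem FiniteField.exists_pow_add_one_eq [Field F] [Fintype F] {Q : ℕ}
    (hcard : Fintype.card F = Q * Q) {y : F} (hy0 : y ≠ 0) (hy : y ^ Q = y) :
    ∃ w : F, w ^ (Q + 1) = y := by
  have hQ : 1 < Q := by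
    have := hcard ▸ Fintype.one_lt_card (α := F)
    nlinarith
  have hfactor : Fintype.card F - 1 = (Q + 1) * (Q - 1) := by
    simpa [hcard] using Nat.mul_self_sub_mul_self_eq Q 1
  obtain ⟨ω, hω⟩ := exists_isPrimitiveRoot_card_sub_one F
  rw [hfactor] at hω
  have : NeZero ((Q + 1) * (Q - 1)) := ⟨Nat.mul_ne_zero (by omega) (by omega)⟩
  obtain ⟨j, -, rfl⟩ := hω.eq_pow_of_pow_eq_one (ξ := y) (by
    rw [← hfactor]; exact FiniteField.pow_card_sub_one_eq_one _ hy0)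
  have hyQ1 : (ω ^ j) ^ (Q - 1) = 1 := by
    refine mul_right_cancel₀ hy0 ?_
    rw [← pow_succ, Nat.sub_add_cancel hQ.le, hy, one_mul]
  rw [← pow_mul, hω.pow_eq_one_iff_dvd] at hyQ1
  obtain ⟨c, rfl⟩ := (Nat.mul_dvd_mul_iff_right (show 0 < Q - 1 by omega)).1 hyQ1
  exact ⟨ω ^ c, by rw [← pow_mul, mul_comm]⟩

/-- The witness is `b j = ω ^ (j (Q + 1) / gcd(n', Q + 1))`, so `b j ^ n' = ω ^ ((Q + 1) n₁ j)` with
`n₁ = n' / gcd(n', Q + 1)`; the bound on `t` keeps these exponents below `Q² - 1`. -/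
theorem exists_pow_injective_of_le_div [Field F] {Q n' t : ℕ} {ω : F}
    (hω : IsPrimitiveRoot ω (Q * Q - 1)) (hn' : 0 < n')
    (ht : t ≤ (Q - 1) / (n' / Nat.gcd n' (Q + 1))) :
    ∃ b : Fin t → F, (∀ j, b j ≠ 0) ∧ Function.Injective (fun j => b j ^ n') ∧
      ∀ j, (b j ^ n') ^ Q = b j ^ n' := by
  obtain ⟨n₁, hn₁⟩ := Nat.gcd_dvd_left n' (Q + 1)
  obtain ⟨s, hs⟩ := Nat.gcd_dvd_right n' (Q + 1)
  set d := Nat.gcd n' (Q + 1)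
  have hd : 0 < d := Nat.gcd_pos_of_pos_left _ hn'
  have hn₁pos : 0 < n₁ := by rw [hn₁] at hn'; exact Nat.pos_of_mul_pos_left hn'
  rw [hn₁, Nat.mul_div_cancel_left _ hd] at ht
  have hfactor : Q * Q - 1 = (Q + 1) * (Q - 1) := by simpa using Nat.mul_self_sub_mul_self_eq Q 1
  have hexp : ∀ j : Fin t, (Q + 1) * n₁ * j < Q * Q - 1 := fun j => by
    have := (Nat.le_div_iff_mul_le hn₁pos).1 ht
    rw [hfactor, mul_assoc]
    exact Nat.mul_lt_mul_of_pos_left (by nlinarith [j.2]) (by omega)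
  have hpow : ∀ j : Fin t, (ω ^ (s * j)) ^ n' = ω ^ ((Q + 1) * n₁ * j) := fun j => by
    rw [← pow_mul, hs, hn₁]
    ring_nf
  refine ⟨fun j => ω ^ (s * j), fun j => pow_ne_zero _ (hω.ne_zero (hexp j).ne_bot), ?_, ?_⟩
  · intro i j hij
    simp only [hpow] at hij
    have := hω.pow_inj (hexp i) (hexp j) hij
    exact Fin.ext (Nat.eq_of_mul_eq_mul_left (by positivity) this)
  · intro j
    set m := (Q + 1) * n₁ * j
    have hQ : 1 ≤ Q := by
      have := hexp j
      rw [hfactor] at this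
      exact Nat.pos_of_ne_zero fun h => by simp [h] at this
    have hfix : (ω ^ m) ^ (Q - 1) = 1 := by
      rw [← pow_mul, hω.pow_eq_one_iff_dvd, hfactor]
      exact ⟨n₁ * j, by ring⟩
    simp only [hpow]
    calc (ω ^ m) ^ Q = (ω ^ m) ^ (Q - 1 + 1) := by rw [Nat.sub_add_cancel hQ]
      _ = ω ^ m := by rw [pow_succ, hfix, one_mul]

section Cosets

variable [Field F] {ι : Type*} {n' : ℕ} {θ : F}

theorem IsPrimitiveRoot.injective_mul_pow (hθ : IsPrimitiveRoot θ n') {b : ι → F}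
    (hb0 : ∀ j, b j ≠ 0) (hb : Function.Injective fun j => b j ^ n') :
    Function.Injective fun ji : ι × Fin n' => b ji.1 * θ ^ (ji.2 : ℕ) := by
  rintro ⟨j, i⟩ ⟨j', i'⟩ h
  obtain rfl : j = j' := hb <| by
    simpa [mul_pow, ← pow_mul, pow_mul', hθ.pow_eq_one] using congrArg (· ^ n') h
  exact Prod.ext rfl (Fin.ext (hθ.pow_inj i.2 i'.2 (mul_left_cancel₀ (hb0 j) h)))

theorem IsPrimitiveRoot.sum_nodalWeight_mul_mul_pow_eq_zero [Fintype ι] [DecidableEq ι]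
    (hθ : IsPrimitiveRoot θ n') {b : ι → F} (hb : Function.Injective fun j => b j ^ n') {S : ℕ}
    (hS : S < n' * (Fintype.card ι - 1)) :
    ∑ ji : ι × Fin n', Lagrange.nodalWeight univ (fun j => b j ^ n') ji.1 *
      (b ji.1 * θ ^ (ji.2 : ℕ)) ^ S = 0 := by
  have hsplit : ∑ ji : ι × Fin n', Lagrange.nodalWeight univ (fun j => b j ^ n') ji.1 *
      (b ji.1 * θ ^ (ji.2 : ℕ)) ^ S =
      (∑ j, Lagrange.nodalWeight univ (fun j => b j ^ n') j * b j ^ S) *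
        ∑ i : Fin n', (θ ^ S) ^ (i : ℕ) := by
    rw [Fintype.sum_prod_type, sum_mul]
    refine sum_congr rfl fun j _ => ?_
    rw [mul_sum]
    exact sum_congr rfl fun i _ => by ring
  rw [hsplit]
  by_cases hθS : θ ^ S = 1
  · obtain ⟨c, rfl⟩ := (hθ.pow_eq_one_iff_dvd S).1 hθS
    have hc : c + 1 < #(univ : Finset ι) := by
      have := Nat.lt_of_mul_lt_mul_left hS
      rw [card_univ]
      omega
    simp only [pow_mul]
    rw [Lagrange.sum_nodalWeight_mul_pow_eq_zero hb.injOn hc, zero_mul]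
  · rw [Fin.sum_univ_eq_sum_range (fun i => (θ ^ S) ^ i), geom_sum_eq hθS, ← pow_mul, pow_mul',
      hθ.pow_eq_one, one_pow, sub_self, zero_div, mul_zero]

end Cosets

theorem exists_hermitian_selfOrthogonal_grsCode [Field F] [Fintype F] [DecidableEq F]
    {p e : ℕ} [ExpChar F p] (hcard : Fintype.card F = p ^ e * p ^ e) {n' t k : ℕ} {θ : F}
    (hθ : IsPrimitiveRoot θ n') {b : Fin t → F} (hb0 : ∀ j, b j ≠ 0)
    (hb : Function.Injective fun j => b j ^ n') (hbfix : ∀ j, (b j ^ n') ^ p ^ e = b j ^ n')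
    (hk : 0 < k) (hkt : (k - 1) * (p ^ e + 1) < n' * (t - 1)) :
    ∃ C : Submodule F (Fin (t * n') → F),
      C ≤ galoisDual p e C ∧ Module.finrank F C = k ∧ IsMinDist C (t * n' - k + 1) := by
  have hw : ∀ j, ∃ w : F, w ^ (p ^ e + 1) = Lagrange.nodalWeight univ (fun j => b j ^ n') j :=
    fun j => FiniteField.exists_pow_add_one_eq hcard
      (Lagrange.nodalWeight_ne_zero hb.injOn (mem_univ j))
      (Lagrange.nodalWeight_pow_expChar_pow hbfix j)
  choose w hw using hw
  let E : Fin t × Fin n' ≃ Fin (t * n') := finProdFinEquiv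
  let a : Fin (t * n') → F := fun i => b (E.symm i).1 * θ ^ ((E.symm i).2 : ℕ)
  let v : Fin (t * n') → F := fun i => w (E.symm i).1
  have ha : Function.Injective a := (hθ.injective_mul_pow hb0 hb).comp E.symm.injective
  have hv : ∀ i, v i ≠ 0 := fun i hvi =>
    Lagrange.nodalWeight_ne_zero hb.injOn (mem_univ (E.symm i).1)
      (by rw [← hw, show w _ = 0 from hvi, zero_pow (by omega)])
  have hkn : k ≤ t * n' := by
    have h1 : k - 1 ≤ (k - 1) * (p ^ e + 1) := Nat.le_mul_of_pos_right _ (by omega)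
    have h2 : n' * (t - 1) ≤ t * n' := by rw [mul_comm]; exact Nat.mul_le_mul_right _ (Nat.sub_le t 1)
    omega
  refine ⟨grsCode k a v, grsCode_le_galoisDual fun l hl m hm => ?_, finrank_grsCode hkn ha hv,
    isMinDist_grsCode hk hkn ha hv⟩
  rw [← E.sum_comp]
  simp only [a, v, Equiv.symm_apply_apply, hw]
  refine hθ.sum_nodalWeight_mul_mul_pow_eq_zero hb ?_
  rw [Fintype.card_fin]
  calc l + p ^ e * m ≤ (k - 1) + p ^ e * (k - 1) := add_le_add (by omega) (by gcongr; omega)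
    _ = (k - 1) * (p ^ e + 1) := by ring
    _ < n' * (t - 1) := hkt

theorem exists_hermitian_selfOrthogonal_MDS_first_general
    (p h : ℕ) (hp : p.Prime) (heven : Even h)
    [Field F] [Fintype F] [DecidableEq F] (hcard : Fintype.card F = p ^ h)
    (n' t n k : ℕ) (hn'pos : 0 < n') (hn' : n' ∣ p ^ h - 1)
    (ht2 : t ≤ (p ^ (h / 2) - 1) / (n' / Nat.gcd n' (p ^ (h / 2) + 1)))
    (hn : n = t * n')
    (hk1 : 1 ≤ k) (hk2 : k ≤ (p ^ (h / 2) + n' * (t - 1)) / (p ^ (h / 2) + 1)) :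
    ∃ C : Submodule F (Fin n → F),
      C ≤ galoisDual p (h / 2) C ∧ Module.finrank F C = k ∧
        IsMinDist C (n - k + 1) := by
  have := Fact.mk hp
  have := charP_of_card_eq_prime_pow hcard
  set Q := p ^ (h / 2)
  have hq : p ^ h = Q * Q := by rw [← pow_add, ← two_mul, Nat.two_mul_div_two_of_even heven]
  rw [hq] at hcard hn'
  obtain ⟨ω, hω⟩ := FiniteField.exists_isPrimitiveRoot_card_sub_one F
  rw [hcard] at hω
  have hθ : IsPrimitiveRoot (ω ^ ((Q * Q - 1) / n')) n' :=
    hω.pow (by have := hcard ▸ Fintype.one_lt_card (α := F); omega) (Nat.div_mul_cancel hn').symm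
  obtain ⟨b, hb0, hb, hbfix⟩ := exists_pow_injective_of_le_div hω hn'pos ht2
  have hkt : (k - 1) * (Q + 1) < n' * (t - 1) := by
    have := (Nat.le_div_iff_mul_le (by omega)).1 hk2
    obtain ⟨K, rfl⟩ : ∃ K, k = K + 1 := ⟨k - 1, by omega⟩
    rw [Nat.add_sub_cancel]
    nlinarith
  subst hn
  exact exists_hermitian_selfOrthogonal_grsCode hcard hθ hb0 hb hbfix hk1 hkt

/-- Theorem (first class of Hermitian self-orthogonal MDS codes): let `q = p^h` with `h` even,
`√q = p^{h/2}`, `n' ∣ q - 1`, `n₁ = n' / gcd(n', √q + 1)`, `1 ≤ t ≤ (√q - 1)/n₁` and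
`n = t·n'`. Then for each `1 ≤ k ≤ ⌊(√q + n'(t-1))/(√q + 1)⌋` there exists an
`[n, k, n-k+1]_q` Hermitian self-orthogonal (MDS) code. -/
theorem exists_hermitian_selfOrthogonal_MDS_first
    (p h : ℕ) (hp : p.Prime) (hh : 0 < h) (heven : Even h)
    [Field F] [Fintype F] [DecidableEq F] (hcard : Fintype.card F = p ^ h)
    (n' t n k : ℕ) (hn'pos : 0 < n') (hn' : n' ∣ p ^ h - 1)
    (ht1 : 1 ≤ t) (ht2 : t ≤ (p ^ (h / 2) - 1) / (n' / Nat.gcd n' (p ^ (h / 2) + 1)))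
    (hn : n = t * n')
    (hk1 : 1 ≤ k) (hk2 : k ≤ (p ^ (h / 2) + n' * (t - 1)) / (p ^ (h / 2) + 1)) :
    ∃ C : Submodule F (Fin n → F),
      C ≤ galoisDual p (h / 2) C ∧ Module.finrank F C = k ∧
        IsMinDist C (n - k + 1) :=
  exists_hermitian_selfOrthogonal_MDS_first_general p h hp heven hcard n' t n k hn'pos hn' ht2 hn
    hk1 hk2
end
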